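/- arXiv:2105.09870 — 4 statements merged into one kernel-verified Lean document; each statement's English description precedes it below -/
import Mathlib

section
/- Let ι : X → X' be an incidence embedding, w' an acyclic partial matching on X', and w the pulled-back partial matching (w(ξ) = ι⁻¹(w'(ι(ξ))) when w'(ι(ξ)) ∈ ι(X), else w(ξ) = ξ). Then w is acyclic. -/
/-! A cycle of the pulled-back matching `w` consists of cells `ξ` with `ξ ≺ w ξ`. For such a
cell `w ξ ≠ ξ` (incidence raises dimension), so `w'` sends `ι ξ` into the image of `ι` and
`ι (w ξ) = w' (ι ξ)`. Since `ι` preserves incidence, every step of the cycle is then a step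
for `w'`, and the cycle pushes forward to a cycle of `w'` in `X'`. -/

section

variable {X X' : Type*}

/-- The relation `ξ₁ ≪ ξ₀` of a partial matching `w`, restricted to `Q(w) = {ξ | ξ ≺ w ξ}`. -/
def matchingRel (prec : X → X → Prop) (w : X → X) (ξ₁ ξ₀ : X) : Prop :=
  prec ξ₁ (w ξ₀) ∧ ξ₁ ≠ ξ₀ ∧ prec ξ₀ (w ξ₀) ∧ prec ξ₁ (w ξ₁)

theorem pullback_apply_of_prec {prec : X → X → Prop} (hirrefl : ∀ ξ, ¬ prec ξ ξ)
    {ι : X → X'} {w' : X' → X'} {w : X → X}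
    (hw : ∀ ξ, (w' (ι ξ) ∈ Set.range ι → ι (w ξ) = w' (ι ξ)) ∧
               (w' (ι ξ) ∉ Set.range ι → w ξ = ξ))
    {ξ : X} (hξ : prec ξ (w ξ)) : ι (w ξ) = w' (ι ξ) := by
  by_cases hrange : w' (ι ξ) ∈ Set.range ι
  · exact (hw ξ).1 hrange
  · rw [(hw ξ).2 hrange] at hξ
    exact absurd hξ (hirrefl ξ)

theorem matchingRel_map {prec : X → X → Prop} {prec' : X' → X' → Prop}
    {ι : X → X'} (hinj : Function.Injective ι)
    (hembed : ∀ ξ' ξ, prec ξ' ξ ↔ prec' (ι ξ') (ι ξ))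
    {w' : X' → X'} {w : X → X} (hcomm : ∀ ξ, prec ξ (w ξ) → ι (w ξ) = w' (ι ξ))
    {ξ₁ ξ₀ : X} (h : matchingRel prec w ξ₁ ξ₀) :
    matchingRel prec' w' (ι ξ₁) (ι ξ₀) := by
  obtain ⟨h₁₀, hne, h₀, h₁⟩ := h
  refine ⟨?_, hinj.ne hne, ?_, ?_⟩
  · rw [← hcomm ξ₀ h₀]; exact (hembed _ _).1 h₁₀
  · rw [← hcomm ξ₀ h₀]; exact (hembed _ _).1 h₀
  · rw [← hcomm ξ₁ h₁]; exact (hembed _ _).1 h₁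

end

theorem pullback_acyclic_general {X X' : Type} [PartialOrder X]
    (dim : X → ℕ)
    (prec : X → X → Prop)
    (hprec : ∀ ξ' ξ, prec ξ' ξ → ξ' ≤ ξ ∧ dim ξ = dim ξ' + 1)
    (prec' : X' → X' → Prop)
    (ι : X → X') (hinj : Function.Injective ι)
    (hembed : ∀ ξ' ξ, prec ξ' ξ ↔ prec' (ι ξ') (ι ξ))
    (w' : X' → X')
    (hacyc' : ∀ η, ¬ Relation.TransGen
      (fun η₁ η₀ => prec' η₁ (w' η₀) ∧ η₁ ≠ η₀ ∧
        prec' η₀ (w' η₀) ∧ prec' η₁ (w' η₁)) η η)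
    (w : X → X)
    (hw : ∀ ξ, (w' (ι ξ) ∈ Set.range ι → ι (w ξ) = w' (ι ξ)) ∧
               (w' (ι ξ) ∉ Set.range ι → w ξ = ξ)) :
    ∀ ξ, ¬ Relation.TransGen
      (fun ξ₁ ξ₀ => prec ξ₁ (w ξ₀) ∧ ξ₁ ≠ ξ₀ ∧
        prec ξ₀ (w ξ₀) ∧ prec ξ₁ (w ξ₁)) ξ ξ := by
  have hirrefl : ∀ ξ, ¬ prec ξ ξ := fun ξ h => by have := (hprec ξ ξ h).2; omega
  have hcomm : ∀ ξ, prec ξ (w ξ) → ι (w ξ) = w' (ι ξ) :=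
    fun _ => pullback_apply_of_prec hirrefl hw
  intro ξ hcycle
  exact hacyc' (ι ξ) (hcycle.lift ι fun _ _ => matchingRel_map hinj hembed hcomm)

/-- Pulling back an acyclic partial matching along an incidence embedding yields
an acyclic partial matching. -/
theorem pullback_acyclic {X X' : Type} [Fintype X] [PartialOrder X]
    [Fintype X'] [PartialOrder X']
    (dim : X → ℕ) (hdim : Monotone dim)
    (dim' : X' → ℕ) (hdim' : Monotone dim')
    (prec : X → X → Prop)
    (hprec : ∀ ξ' ξ, prec ξ' ξ → ξ' ≤ ξ ∧ dim ξ = dim ξ' + 1)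
    (prec' : X' → X' → Prop)
    (hprec' : ∀ η' η, prec' η' η → η' ≤ η ∧ dim' η = dim' η' + 1)
    (ι : X → X') (hinj : Function.Injective ι)
    (hembed : ∀ ξ' ξ, prec ξ' ξ ↔ prec' (ι ξ') (ι ξ))
    (w' : X' → X')
    (hinv' : ∀ η, w' (w' η) = η)
    (htri' : ∀ η, w' η = η ∨ prec' η (w' η) ∨ prec' (w' η) η)
    (hacyc' : ∀ η, ¬ Relation.TransGen
      (fun η₁ η₀ => prec' η₁ (w' η₀) ∧ η₁ ≠ η₀ ∧
        prec' η₀ (w' η₀) ∧ prec' η₁ (w' η₁)) η η)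
    (w : X → X)
    (hw : ∀ ξ, (w' (ι ξ) ∈ Set.range ι → ι (w ξ) = w' (ι ξ)) ∧
               (w' (ι ξ) ∉ Set.range ι → w ξ = ξ)) :
    ∀ ξ, ¬ Relation.TransGen
      (fun ξ₁ ξ₀ => prec ξ₁ (w ξ₀) ∧ ξ₁ ≠ ξ₀ ∧
        prec ξ₀ (w ξ₀) ∧ prec ξ₁ (w ξ₁)) ξ ξ :=
  pullback_acyclic_general dim prec hprec prec' ι hinj hembed w' hacyc' w hw
end

section
/- Let (w₁,…,w_n) be a sequence of partial matchings on a cell complex X. Define inductively w_{≤0} = id and w_{≤i}(ξ) = w_i(ξ) if both ξ and w_i(ξ) are fixed points of w_{≤i-1}, and w_{≤i}(ξ) = w_{≤i-1}(ξ) otherwise. Then each w_{≤i} is a partial matching on X (an involution satisfying the incidence trichotomy). -/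
open Classical in
/-- The inductive Mate construction: `mateSeq w 0 = id` and
`mateSeq w (i+1) ξ = w (i+1) ξ` when both `ξ` and `w (i+1) ξ` are fixed points of
`mateSeq w i`, otherwise `mateSeq w i ξ`. -/
noncomputable def mateSeq {X : Type} (w : ℕ → X → X) : ℕ → X → X
  | 0 => id
  | (i+1) => fun ξ =>
      if mateSeq w i ξ = ξ ∧ mateSeq w i (w (i+1) ξ) = w (i+1) ξ
      then w (i+1) ξ else mateSeq w i ξ

open Classical in
lemma mateSeq_succ_pos {X : Type} (w : ℕ → X → X) (i : ℕ) (ξ : X)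
    (h : mateSeq w i ξ = ξ ∧ mateSeq w i (w (i+1) ξ) = w (i+1) ξ) :
    mateSeq w (i+1) ξ = w (i+1) ξ := by
  simp only [mateSeq]; rw [if_pos h]

open Classical in
lemma mateSeq_succ_neg {X : Type} (w : ℕ → X → X) (i : ℕ) (ξ : X)
    (h : ¬(mateSeq w i ξ = ξ ∧ mateSeq w i (w (i+1) ξ) = w (i+1) ξ)) :
    mateSeq w (i+1) ξ = mateSeq w i ξ := by
  simp only [mateSeq]; rw [if_neg h]

/-- Each stage of the Mate construction is a partial matching. -/
theorem mateSeq_matching {X : Type} [Fintype X] [PartialOrder X]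
    (dim : X → ℕ) (hdim : Monotone dim)
    (prec : X → X → Prop)
    (hprec : ∀ ξ' ξ, prec ξ' ξ → ξ' ≤ ξ ∧ dim ξ = dim ξ' + 1)
    (n : ℕ) (w : ℕ → X → X)
    (hinv : ∀ k, 1 ≤ k → k ≤ n → ∀ ξ, w k (w k ξ) = ξ)
    (htri : ∀ k, 1 ≤ k → k ≤ n → ∀ ξ,
      w k ξ = ξ ∨ prec ξ (w k ξ) ∨ prec (w k ξ) ξ) :
    ∀ i ≤ n, (∀ ξ, mateSeq w i (mateSeq w i ξ) = ξ) ∧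
      (∀ ξ, mateSeq w i ξ = ξ ∨ prec ξ (mateSeq w i ξ) ∨ prec (mateSeq w i ξ) ξ) := by
  intro i hi
  induction i with
  | zero => exact ⟨fun ξ => rfl, fun ξ => Or.inl rfl⟩
  | succ i ih =>
    have hi' : i ≤ n := Nat.le_of_succ_le hi
    obtain ⟨ihinv, ihtri⟩ := ih hi'
    have h1 : 1 ≤ i + 1 := Nat.le_add_left 1 i
    refine ⟨fun ξ => ?_, fun ξ => ?_⟩
    · by_cases h : mateSeq w i ξ = ξ ∧ mateSeq w i (w (i+1) ξ) = w (i+1) ξ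
      · have hg : w (i+1) (w (i+1) ξ) = ξ := hinv (i+1) h1 hi ξ
        rw [mateSeq_succ_pos w i ξ h,
          mateSeq_succ_pos w i (w (i+1) ξ) ⟨h.2, by rw [hg]; exact h.1⟩]
        exact hg
      · rw [mateSeq_succ_neg w i ξ h]
        rw [mateSeq_succ_neg w i (mateSeq w i ξ), ihinv ξ]
        intro h2
        have hfix : mateSeq w i ξ = ξ := by
          have := h2.1
          rw [ihinv ξ] at this
          exact this.symm
        rw [hfix] at h2
        exact h ⟨hfix, h2.2⟩
    · by_cases h : mateSeq w i ξ = ξ ∧ mateSeq w i (w (i+1) ξ) = w (i+1) ξ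
      · rw [mateSeq_succ_pos w i ξ h]
        exact htri (i+1) h1 hi ξ
      · rw [mateSeq_succ_neg w i ξ h]
        exact ihtri ξ
end

section
/- (Patchwork) Let X be a cell complex, P a poset, and f : (X, ≤) → P order-preserving. Suppose for each p ∈ P, w^p : f⁻¹(p) → f⁻¹(p) is an acyclic partial matching on the fiber, where the incidence relation on the fiber is the restriction of that on X. Then the map w : X → X defined by w(ξ) = w^{f(ξ)}(ξ) is an acyclic partial matching on X. -/
/-- Patchwork theorem: acyclic partial matchings on the fibers of an
order-preserving map assemble into a global acyclic partial matching. -/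
theorem patchwork {X P : Type} [Fintype X] [PartialOrder X] [PartialOrder P]
    (dim : X → ℕ) (hdim : Monotone dim)
    (prec : X → X → Prop)
    (hprec : ∀ ξ' ξ, prec ξ' ξ → ξ' ≤ ξ ∧ dim ξ = dim ξ' + 1)
    (f : X → P) (hf : Monotone f)
    (wp : P → X → X)
    (hfiber : ∀ ξ, f (wp (f ξ) ξ) = f ξ)
    (hinv : ∀ ξ, wp (f ξ) (wp (f ξ) ξ) = ξ)
    (htri : ∀ ξ, wp (f ξ) ξ = ξ ∨ prec ξ (wp (f ξ) ξ) ∨ prec (wp (f ξ) ξ) ξ)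
    (hacyc : ∀ p ξ, ¬ Relation.TransGen
      (fun ξ₁ ξ₀ => f ξ₁ = p ∧ f ξ₀ = p ∧ prec ξ₁ (wp p ξ₀) ∧ ξ₁ ≠ ξ₀ ∧
        prec ξ₀ (wp p ξ₀) ∧ prec ξ₁ (wp p ξ₁)) ξ ξ)
    (w : X → X) (hw : ∀ ξ, w ξ = wp (f ξ) ξ) :
    (∀ ξ, w (w ξ) = ξ) ∧
    (∀ ξ, w ξ = ξ ∨ prec ξ (w ξ) ∨ prec (w ξ) ξ) ∧
    (∀ ξ, ¬ Relation.TransGen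
      (fun ξ₁ ξ₀ => prec ξ₁ (w ξ₀) ∧ ξ₁ ≠ ξ₀ ∧
        prec ξ₀ (w ξ₀) ∧ prec ξ₁ (w ξ₁)) ξ ξ) := by

  have hfw : ∀ ξ, f (w ξ) = f ξ := fun ξ => by rw [hw]; exact hfiber ξ
  set R := fun ξ₁ ξ₀ => prec ξ₁ (w ξ₀) ∧ ξ₁ ≠ ξ₀ ∧ prec ξ₀ (w ξ₀) ∧ prec ξ₁ (w ξ₁)
    with hR
  have hstep : ∀ {a b}, R a b → f a ≤ f b := by
    intro a b h
    have := hf (hprec _ _ h.1).1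
    rwa [hfw] at this
  have hmono : ∀ {a b}, Relation.TransGen R a b → f a ≤ f b := by
    intro a b h
    induction h with
    | single h => exact hstep h
    | tail _ h ih => exact le_trans ih (hstep h)
  refine ⟨fun ξ => by rw [hw, hw ξ, hfiber, hinv], fun ξ => by rw [hw]; exact htri ξ, ?_⟩
  intro ξ hcyc
  apply hacyc (f ξ) ξ
  have key : ∀ a b, Relation.TransGen R a b → f a = f b →
      Relation.TransGen (fun ξ₁ ξ₀ => f ξ₁ = f ξ ∧ f ξ₀ = f ξ ∧ prec ξ₁ (wp (f ξ) ξ₀)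
        ∧ ξ₁ ≠ ξ₀ ∧ prec ξ₀ (wp (f ξ) ξ₀) ∧ prec ξ₁ (wp (f ξ) ξ₁)) a b →
      True := fun _ _ _ _ _ => trivial
  clear key
  have main : ∀ a b, Relation.TransGen R a b → f a = f b → f b = f ξ →
      Relation.TransGen (fun ξ₁ ξ₀ => f ξ₁ = f ξ ∧ f ξ₀ = f ξ ∧ prec ξ₁ (wp (f ξ) ξ₀)
        ∧ ξ₁ ≠ ξ₀ ∧ prec ξ₀ (wp (f ξ) ξ₀) ∧ prec ξ₁ (wp (f ξ) ξ₁)) a b := by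
    intro a b h
    induction h with
    | single h =>
      intro hab hb
      have ha : f a = f ξ := hab.trans hb
      refine Relation.TransGen.single ⟨ha, hb, ?_, h.2.1, ?_, ?_⟩
      · have := h.1; rwa [hw, hb] at this
      · have := h.2.2.1; rwa [hw, hb] at this
      · have := h.2.2.2; rwa [hw, ha] at this
    | @tail c b h1 h2 ih =>
      intro hab hb
      have hc : f c = f b := le_antisymm (hstep h2) (hab ▸ hmono h1)
      have hcξ : f c = f ξ := hc.trans hb
      refine (ih (le_antisymm (hmono h1) (hab ▸ hstep h2)) hcξ).tail
        ⟨hcξ, hb, ?_, h2.2.1, ?_, ?_⟩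
      · have := h2.1; rwa [hw, hb] at this
      · have := h2.2.2.1; rwa [hw, hb] at this
      · have := h2.2.2.2; rwa [hw, hcξ] at this
  exact main ξ ξ hcyc rfl rfl
end

section
/- Let w be a stable compatible matching on a cell complex X which is embeddable into H_n via incidence embedding ι, with w(ξ) = α_{i(ξ)}(ξ) where α_i is the pullback of the bit-flip matching M_i. Then w is acyclic: there is no closed flowline ξ₀ ≺ w(ξ₀) ≻ ξ₁ ≺ w(ξ₁) ≻ … ≻ ξ_k ≺ w(ξ_k) ≻ ξ₀ with all cells distinct. -/
/-!
Push a closed flowline into the hypercube: each step `ξ ↦ ξ'` switches on the bit `idx ξ`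
(going up to `w ξ`) and then switches off some other bit (going down to `ξ'`). Let `i` be the
least index `idx ζ` over the cells `ζ` of the cycle. The cell with index `i` switches bit `i` on,
so since the loop closes, some step `x ↦ y` must switch it off again. As `i` is minimal and is
not the index of `x` or `y`, we get `i < idx x`, `i < idx y` and `α i y = w x`: an unstable pair.
-/

/-- Dimension of a cell of the hypercube complex: number of 1 coordinates. -/
def hdim {n : ℕ} (x : Fin n → Bool) : ℕ :=
  (Finset.univ.filter (fun j => x j = true)).card

/-- Flip the i-th bit. -/
def bflip {n : ℕ} (i : Fin n) (x : Fin n → Bool) : Fin n → Bool :=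
  fun j => if j = i then !(x j) else x j

/-- Primary face relation in the hypercube complex. -/
def primFace {n : ℕ} (x' x : Fin n → Bool) : Prop :=
  (∀ j, x' j ≤ x j) ∧ hdim x = hdim x' + 1

open Relation

section Hypercube

variable {n : ℕ}

lemma bflip_bflip (i : Fin n) (x : Fin n → Bool) : bflip i (bflip i x) = x := by
  funext j; by_cases h : j = i <;> simp [bflip, h]

lemma bflip_apply_self (i : Fin n) (x : Fin n → Bool) : bflip i x i = !x i := by
  simp [bflip]

lemma bflip_apply_of_ne {i j : Fin n} (x : Fin n → Bool) (h : j ≠ i) : bflip i x j = x j := by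
  simp [bflip, h]

lemma primFace_irrefl (x : Fin n → Bool) : ¬ primFace x x := by
  rintro ⟨-, h⟩; omega

lemma primFace.apply_eq_false_of_bflip {i : Fin n} {x : Fin n → Bool}
    (h : primFace x (bflip i x)) : x i = false := by
  have hi := h.1 i
  rw [bflip_apply_self] at hi
  revert hi; cases x i <;> decide

lemma primFace.eq_bflip {x' x : Fin n → Bool} (h : primFace x' x) {j : Fin n}
    (hj' : x' j = false) (hj : x j = true) : x' = bflip j x := by
  obtain ⟨hle, hd⟩ := h
  have hsub : ({t | x' t = true} : Finset (Fin n)) ⊆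
      ({t | x t = true} : Finset (Fin n)).erase j := by
    intro t ht
    simp only [Finset.mem_filter, Finset.mem_univ, true_and, Finset.mem_erase] at ht ⊢
    exact ⟨by rintro rfl; simp_all, Bool.le_iff_imp.mp (hle t) ht⟩
  have hcard : (({t | x t = true} : Finset (Fin n)).erase j).card ≤ hdim x' := by
    rw [Finset.card_erase_of_mem (by simpa using hj)]
    unfold hdim at hd ⊢; omega
  have heq := Finset.eq_of_subset_of_card_le hsub hcard
  funext t
  have ht := Finset.ext_iff.mp heq t
  by_cases htj : t = j
  · subst htj; simp [bflip, hj, hj']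
  · simp only [Finset.mem_filter, Finset.mem_univ, true_and, Finset.mem_erase, htj,
      ne_eq, not_false_eq_true] at ht
    rw [bflip_apply_of_ne x htj]
    exact Bool.eq_iff_iff.mpr ht

end Hypercube

theorem Relation.ReflTransGen.exists_step_of_not {α : Type*} {r : α → α → Prop} {P : α → Prop}
    {a b : α} (h : ReflTransGen r a b) (ha : P a) (hb : ¬ P b) :
    ∃ x y, ReflTransGen r a x ∧ r x y ∧ P x ∧ ¬ P y ∧ ReflTransGen r y b := by
  induction h with
  | refl => exact absurd ha hb
  | @tail c d hac hcd ih =>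
    by_cases hc : P c
    · exact ⟨c, d, hac, hcd, hc, hb, .refl⟩
    · obtain ⟨x, y, hax, hxy, hx, hy, hyc⟩ := ih hc
      exact ⟨x, y, hax, hxy, hx, hy, hyc.tail hcd⟩

theorem Relation.TransGen.exists_switch_off {X κ : Type*} [LinearOrder κ] [WellFoundedLT κ]
    {r : X → X → Prop} {idx : X → κ} {P : κ → X → Prop}
    (hon : ∀ a b, r a b → P (idx a) b) (hoff : ∀ a b, r a b → ¬ P (idx a) a)
    {ξ : X} (h : TransGen r ξ ξ) :
    ∃ x y i, r x y ∧ P i x ∧ ¬ P i y ∧ i ≤ idx x ∧ i ≤ idx y := by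
  obtain ⟨ζ, ⟨hξζ, hζξ⟩, hmin⟩ := (InvImage.wf idx wellFounded_lt).has_min
    {ζ | ReflTransGen r ξ ζ ∧ ReflTransGen r ζ ξ} ⟨ξ, .refl, .refl⟩
  have hmin_cycle : ∀ η, ReflTransGen r ζ η → ReflTransGen r η ζ → idx ζ ≤ idx η :=
    fun η h₁ h₂ => not_lt.1 (hmin η ⟨hξζ.trans h₁, h₂.trans hζξ⟩)
  obtain ⟨ζ', hζζ', hζ'ζ⟩ := TransGen.head'_iff.mp ((TransGen.trans_right hζξ h).trans_left hξζ)
  obtain ⟨x, y, hζ'x, hxy, hx, hy, hyζ⟩ := hζ'ζ.exists_step_of_not (hon _ _ hζζ') (hoff _ _ hζζ')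
  have hζx : ReflTransGen r ζ x := hζ'x.head hζζ'
  exact ⟨x, y, idx ζ, hxy, hx, hy, hmin_cycle x hζx (hyζ.head hxy), hmin_cycle y (hζx.tail hxy) hyζ⟩

section Flowline

variable {X : Type} {n : ℕ} {prec : X → X → Prop} {ι : X → (Fin n → Bool)}
  {α : Fin n → X → X} {w : X → X} {idx : X → Fin n}

def flowStep (prec : X → X → Prop) (w : X → X) (ξ₀ ξ₁ : X) : Prop :=
  prec ξ₁ (w ξ₀) ∧ ξ₁ ≠ ξ₀ ∧ prec ξ₀ (w ξ₀) ∧ prec ξ₁ (w ξ₁)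

lemma embed_partner_eq_bflip (hembed : ∀ ξ' ξ, prec ξ' ξ ↔ primFace (ι ξ') (ι ξ))
    (hα : ∀ i ξ, (bflip i (ι ξ) ∈ Set.range ι → ι (α i ξ) = bflip i (ι ξ)) ∧
                 (bflip i (ι ξ) ∉ Set.range ι → α i ξ = ξ))
    (hcompat : ∀ ξ, w ξ ≠ ξ → w ξ = α (idx ξ) ξ) {ζ : X} (h : prec ζ (w ζ)) :
    ι (w ζ) = bflip (idx ζ) (ι ζ) := by
  have hne : w ζ ≠ ζ := fun heq => primFace_irrefl _ ((hembed _ _).1 (heq ▸ h))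
  have hrange : bflip (idx ζ) (ι ζ) ∈ Set.range ι := by
    by_contra hr
    exact hne ((hcompat ζ hne).trans ((hα _ ζ).2 hr))
  rw [hcompat ζ hne, (hα _ ζ).1 hrange]

lemma embed_apply_idx_eq_false (hembed : ∀ ξ' ξ, prec ξ' ξ ↔ primFace (ι ξ') (ι ξ))
    (hup : ∀ ζ, prec ζ (w ζ) → ι (w ζ) = bflip (idx ζ) (ι ζ)) {ζ : X} (h : prec ζ (w ζ)) :
    ι ζ (idx ζ) = false :=
  primFace.apply_eq_false_of_bflip (hup ζ h ▸ (hembed _ _).1 h)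

lemma flowStep.embed_apply_idx (hinj : Function.Injective ι)
    (hembed : ∀ ξ' ξ, prec ξ' ξ ↔ primFace (ι ξ') (ι ξ))
    (hup : ∀ ζ, prec ζ (w ζ) → ι (w ζ) = bflip (idx ζ) (ι ζ)) {x y : X}
    (hxy : flowStep prec w x y) : ι y (idx x) = true := by
  have hx := embed_apply_idx_eq_false hembed hup hxy.2.2.1
  by_contra hy
  have hwx : ι (w x) (idx x) = true := by rw [hup x hxy.2.2.1, bflip_apply_self, hx]; rfl
  have hyx := ((hembed _ _).1 hxy.1).eq_bflip (Bool.eq_false_iff.mpr hy) hwx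
  rw [hup x hxy.2.2.1, bflip_bflip] at hyx
  exact hxy.2.1 (hinj hyx)

lemma flowStep.unstable_of_switch_off (hinj : Function.Injective ι)
    (hembed : ∀ ξ' ξ, prec ξ' ξ ↔ primFace (ι ξ') (ι ξ))
    (hα : ∀ i ξ, bflip i (ι ξ) ∈ Set.range ι → ι (α i ξ) = bflip i (ι ξ))
    (hw : Function.Injective w)
    (hup : ∀ ζ, prec ζ (w ζ) → ι (w ζ) = bflip (idx ζ) (ι ζ)) {x y : X} {i : Fin n}
    (hxy : flowStep prec w x y) (hx : ι x i = true) (hy : ι y i = false)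
    (hix : i ≤ idx x) (hiy : i ≤ idx y) : i < idx x ∧ i < idx y ∧ α i y = w x := by
  have hne : idx x ≠ i := by
    rintro rfl
    simp [embed_apply_idx_eq_false hembed hup hxy.2.2.1] at hx
  have hwx : ι (w x) i = true := by rw [hup x hxy.2.2.1, bflip_apply_of_ne _ hne.symm, hx]
  have hflip : bflip i (ι y) = ι (w x) := by
    rw [((hembed _ _).1 hxy.1).eq_bflip hy hwx, bflip_bflip]
  refine ⟨lt_of_le_of_ne hix hne.symm, lt_of_le_of_ne hiy fun h => hxy.2.1 (hw (hinj ?_)),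
    hinj ?_⟩
  · rw [hup y hxy.2.2.2, ← h, hflip]
  · rw [hα i y (hflip ▸ Set.mem_range_self _), hflip]

end Flowline

theorem stable_compatible_acyclic_general {X : Type}
    (n : ℕ) (prec : X → X → Prop) (ι : X → (Fin n → Bool))
    (hinj : Function.Injective ι)
    (hembed : ∀ ξ' ξ, prec ξ' ξ ↔ primFace (ι ξ') (ι ξ))
    (α : Fin n → X → X)
    (hα : ∀ i ξ, (bflip i (ι ξ) ∈ Set.range ι → ι (α i ξ) = bflip i (ι ξ)) ∧
                 (bflip i (ι ξ) ∉ Set.range ι → α i ξ = ξ))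
    (w : X → X) (idx : X → Fin n)
    (hinvw : ∀ ξ, w (w ξ) = ξ)
    (hcompat : ∀ ξ, w ξ ≠ ξ → w ξ = α (idx ξ) ξ)
    (hstable : ¬ ∃ (ξ₀ ξ₁ : X) (i : Fin n),
      prec ξ₀ (w ξ₀) ∧ prec ξ₁ (w ξ₀) ∧ prec ξ₁ (w ξ₁) ∧ ξ₁ ≠ ξ₀ ∧
      i < idx ξ₀ ∧ i < idx ξ₁ ∧ α i ξ₁ = w ξ₀) :
    ∀ ξ, ¬ Relation.TransGen
      (fun ξ₁ ξ₀ => prec ξ₁ (w ξ₀) ∧ ξ₁ ≠ ξ₀ ∧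
        prec ξ₀ (w ξ₀) ∧ prec ξ₁ (w ξ₁)) ξ ξ := by
  intro ξ hcyc
  have hup : ∀ ζ, prec ζ (w ζ) → ι (w ζ) = bflip (idx ζ) (ι ζ) :=
    fun _ => embed_partner_eq_bflip hembed hα hcompat
  obtain ⟨x, y, i, hxy, hx, hy, hix, hiy⟩ :=
    ((transGen_swap (r := flowStep prec w)).mp hcyc).exists_switch_off
      (P := fun i ζ => ι ζ i = true) (fun _ _ hab => hab.embed_apply_idx hinj hembed hup)
      (fun _ _ hab => by simp [embed_apply_idx_eq_false hembed hup hab.2.2.1])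
  obtain ⟨hlt₀, hlt₁, hαy⟩ := hxy.unstable_of_switch_off hinj hembed (fun i ξ => (hα i ξ).1)
    (Function.Involutive.injective hinvw) hup hx (Bool.eq_false_iff.mpr hy) hix hiy
  exact hstable ⟨x, y, i, hxy.2.2.1, hxy.1, hxy.2.2.2, hxy.2.1, hlt₀, hlt₁, hαy⟩

/-- A stable compatible matching on a cell complex embeddable into the hypercube
complex, built from the pullbacks `α i` of the bit-flip matchings `M_i`, is
acyclic: there is no closed flowline. -/
theorem stable_compatible_acyclic {X : Type} [Fintype X]
    (n : ℕ) (prec : X → X → Prop) (ι : X → (Fin n → Bool))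
    (hinj : Function.Injective ι)
    (hembed : ∀ ξ' ξ, prec ξ' ξ ↔ primFace (ι ξ') (ι ξ))
    (α : Fin n → X → X)
    (hα : ∀ i ξ, (bflip i (ι ξ) ∈ Set.range ι → ι (α i ξ) = bflip i (ι ξ)) ∧
                 (bflip i (ι ξ) ∉ Set.range ι → α i ξ = ξ))
    (w : X → X) (idx : X → Fin n)
    (hinvw : ∀ ξ, w (w ξ) = ξ)
    (htri : ∀ ξ, w ξ = ξ ∨ prec ξ (w ξ) ∨ prec (w ξ) ξ)
    (hcompat : ∀ ξ, w ξ ≠ ξ → w ξ = α (idx ξ) ξ)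
    (hstable : ¬ ∃ (ξ₀ ξ₁ : X) (i : Fin n),
      prec ξ₀ (w ξ₀) ∧ prec ξ₁ (w ξ₀) ∧ prec ξ₁ (w ξ₁) ∧ ξ₁ ≠ ξ₀ ∧
      i < idx ξ₀ ∧ i < idx ξ₁ ∧ α i ξ₁ = w ξ₀) :
    ∀ ξ, ¬ Relation.TransGen
      (fun ξ₁ ξ₀ => prec ξ₁ (w ξ₀) ∧ ξ₁ ≠ ξ₀ ∧
        prec ξ₀ (w ξ₀) ∧ prec ξ₁ (w ξ₁)) ξ ξ :=
  stable_compatible_acyclic_general n prec ι hinj hembed α hα w idx hinvw hcompat hstable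
end
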